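/- arXiv:2203.00296 — 2 statements merged into one kernel-verified Lean document; each statement's English description precedes it below -/
import Mathlib

section
/- Let η, γ : ℝⁿ → ℝ be continuous functions that are r-homogeneous of the same degree m > 0 with weight vector r = (r₁,…,rₙ), rᵢ > 0. Suppose γ(x) ≤ 0 for all x, and that for every x ≠ 0 with γ(x) = 0 one has η(x) < 0. Then there exist λ* ∈ ℝ and c > 0 such that for all λ ≥ λ* and all x ≠ 0, η(x) + λ γ(x) ≤ −c ‖x‖_{r}^m, where ‖·‖_r is any r-homogeneous norm of degree 1 (e.g., ‖x‖_r = (Σᵢ |xᵢ|^{p/rᵢ})^{1/p} for suitable p). -/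
open Real Set

/-- `V` is `r`-homogeneous of degree `m`: `V(ε^{r₁}x₁,…,ε^{rₙ}xₙ) = ε^m V(x)` for all `ε > 0`. -/
def RHomogeneous {n : ℕ} (r : Fin n → ℝ) (m : ℝ) (V : (Fin n → ℝ) → ℝ) : Prop :=
  ∀ ε : ℝ, 0 < ε → ∀ x : Fin n → ℝ, V (fun i => ε ^ (r i) * x i) = ε ^ m * V x

/-- Core compactness lemma on the Euclidean unit sphere. -/
lemma core_sphere {n : ℕ} (η γ : (Fin n → ℝ) → ℝ) (hηc : Continuous η) (hγc : Continuous γ)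
    (hγneg : ∀ x, γ x ≤ 0)
    (himp : ∀ x ∈ Metric.sphere (0 : Fin n → ℝ) 1, γ x = 0 → η x < 0) :
    ∃ lam0 : ℝ, 0 ≤ lam0 ∧ ∃ c0 : ℝ, 0 < c0 ∧
      ∀ lam : ℝ, lam0 ≤ lam → ∀ x ∈ Metric.sphere (0 : Fin n → ℝ) 1,
        η x + lam * γ x ≤ -c0 := by
  set K := Metric.sphere (0 : Fin n → ℝ) 1 with hKdef
  have hKc : IsCompact K := isCompact_sphere 0 1
  by_cases hKne : K.Nonempty
  swap
  · exact ⟨0, le_refl 0, 1, one_pos, fun lam _ x hx => absurd ⟨x, hx⟩ hKne⟩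
  -- claim 1 : near {γ = 0}, η is negative
  have claim1 : ∃ δ₁ : ℝ, 0 < δ₁ ∧ ∀ x ∈ K, -δ₁ ≤ γ x → η x < 0 := by
    have hFc : IsCompact (K ∩ {x | 0 ≤ η x}) :=
      hKc.inter_right (isClosed_le continuous_const hηc)
    by_cases hF : (K ∩ {x | 0 ≤ η x}).Nonempty
    · obtain ⟨x₁, hx₁, hmax⟩ := hFc.exists_isMaxOn hF hγc.continuousOn
      have hγx₁ : γ x₁ < 0 := by
        rcases (hγneg x₁).lt_or_eq with h | h
        · exact h
        · exact absurd (himp x₁ hx₁.1 h) (not_lt.mpr hx₁.2)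
      refine ⟨-γ x₁ / 2, by linarith, ?_⟩
      intro x hxK hge
      by_contra h
      have hxF : x ∈ K ∩ {x | 0 ≤ η x} := ⟨hxK, not_lt.mp h⟩
      have h2 : γ x ≤ γ x₁ := hmax hxF
      linarith
    · refine ⟨1, one_pos, fun x hxK _ => ?_⟩
      by_contra h
      exact hF ⟨x, hxK, not_lt.mp h⟩
  obtain ⟨δ₁, hδ₁, hclaim1⟩ := claim1
  -- claim 2 : on the region where γ ≥ -δ₁, η ≤ -δ₂
  have claim2 : ∃ δ₂ : ℝ, 0 < δ₂ ∧ ∀ x ∈ K, -δ₁ ≤ γ x → η x ≤ -δ₂ := by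
    have hGc : IsCompact (K ∩ {x | -δ₁ ≤ γ x}) :=
      hKc.inter_right (isClosed_le continuous_const hγc)
    by_cases hG : (K ∩ {x | -δ₁ ≤ γ x}).Nonempty
    · obtain ⟨x₂, hx₂, hmax2⟩ := hGc.exists_isMaxOn hG hηc.continuousOn
      have hx₂neg : η x₂ < 0 := hclaim1 x₂ hx₂.1 hx₂.2
      refine ⟨-η x₂, by linarith, fun x hxK hge => ?_⟩
      have : η x ≤ η x₂ := hmax2 ⟨hxK, hge⟩
      linarith
    · exact ⟨1, one_pos, fun x hxK hge => absurd ⟨x, hxK, hge⟩ hG⟩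
  obtain ⟨δ₂, hδ₂, hclaim2⟩ := claim2
  -- max of η on K
  obtain ⟨xM, hxM, hMmax⟩ := hKc.exists_isMaxOn hKne hηc.continuousOn
  set M := η xM with hMdef
  refine ⟨max 0 ((M + δ₂) / δ₁), le_max_left _ _, δ₂, hδ₂, ?_⟩
  intro lam hlam x hxK
  have hlam0 : 0 ≤ lam := le_trans (le_max_left _ _) hlam
  by_cases hcase : -δ₁ ≤ γ x
  · have h1 : η x ≤ -δ₂ := hclaim2 x hxK hcase
    have h2 : 0 ≤ lam * (-γ x) := mul_nonneg hlam0 (by linarith [hγneg x])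
    nlinarith
  · push_neg at hcase
    have hηM : η x ≤ M := hMmax hxK
    have h3 : (M + δ₂) / δ₁ ≤ lam := le_trans (le_max_right _ _) hlam
    have h4 : M + δ₂ ≤ lam * δ₁ := by
      rw [div_le_iff₀ hδ₁] at h3; linarith
    have h5 : lam * γ x ≤ lam * (-δ₁) := mul_le_mul_of_nonneg_left hcase.le hlam0
    linarith

/-- Any nonzero point can be dilated onto the unit sphere. -/
lemma dilate_to_sphere {n : ℕ} (r : Fin n → ℝ) (hr : ∀ i, 0 < r i)
    (x : Fin n → ℝ) (hx : x ≠ 0) :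
    ∃ ε : ℝ, 0 < ε ∧ ‖(fun i => ε ^ (r i) * x i : Fin n → ℝ)‖ = 1 := by
  obtain ⟨i, hxi⟩ : ∃ i, x i ≠ 0 := by
    by_contra h
    push_neg at h
    exact hx (funext h)
  haveI : Nonempty (Fin n) := ⟨i⟩
  set g : ℝ → ℝ := fun ε => ‖(fun j => ε ^ (r j) * x j : Fin n → ℝ)‖ with hgdef
  have hgc : Continuous g := by
    apply Continuous.norm
    apply continuous_pi
    intro j
    exact (continuous_iff_continuousAt.mpr fun ε =>
      Real.continuousAt_rpow_const ε (r j) (Or.inr (hr j).le)).mul continuous_const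
  -- minimal weight
  set ρ : ℝ := Finset.univ.inf' Finset.univ_nonempty r with hρdef
  have hρpos : 0 < ρ := by
    rw [hρdef, Finset.lt_inf'_iff]
    exact fun j _ => hr j
  have hρle : ∀ j, ρ ≤ r j := fun j => Finset.inf'_le r (Finset.mem_univ j)
  -- small ε
  set ε₁ : ℝ := min 1 ((‖x‖ + 1)⁻¹ ^ ρ⁻¹) with hε₁def
  have hxpos : (0:ℝ) < ‖x‖ + 1 := by positivity
  have hε₁pos : 0 < ε₁ := lt_min one_pos (Real.rpow_pos_of_pos (by positivity) _)
  have hε₁le1 : ε₁ ≤ 1 := min_le_left _ _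
  have hg1 : g ε₁ ≤ 1 := by
    rw [hgdef]
    refine (pi_norm_le_iff_of_nonneg zero_le_one).mpr fun j => ?_
    rw [Real.norm_eq_abs, abs_mul, abs_of_nonneg (Real.rpow_nonneg hε₁pos.le _)]
    have h2 : ε₁ ^ (r j) ≤ ε₁ ^ ρ :=
      Real.rpow_le_rpow_of_exponent_ge hε₁pos hε₁le1 (hρle j)
    have h3 : ε₁ ^ ρ ≤ ((‖x‖ + 1)⁻¹ ^ ρ⁻¹) ^ ρ :=
      Real.rpow_le_rpow hε₁pos.le (min_le_right _ _) hρpos.le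
    have h4 : ((‖x‖ + 1)⁻¹ ^ ρ⁻¹) ^ ρ = (‖x‖ + 1)⁻¹ := by
      rw [← Real.rpow_mul (by positivity), inv_mul_cancel₀ hρpos.ne', Real.rpow_one]
    have h5 : |x j| ≤ ‖x‖ := by
      have := norm_le_pi_norm x j
      rwa [Real.norm_eq_abs] at this
    have h6 : ε₁ ^ (r j) * |x j| ≤ (‖x‖ + 1)⁻¹ * ‖x‖ := by
      apply mul_le_mul (by linarith [h4 ▸ h3]) h5 (abs_nonneg _) (by positivity)
    have h7 : (‖x‖ + 1)⁻¹ * ‖x‖ ≤ 1 := by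
      rw [← div_eq_inv_mul]
      exact (div_le_one hxpos).mpr (by linarith [norm_nonneg x])
    linarith
  -- large ε
  set ε₂ : ℝ := max 1 (|x i|⁻¹ ^ (r i)⁻¹) with hε₂def
  have hε₂ge1 : (1:ℝ) ≤ ε₂ := le_max_left _ _
  have habs : 0 < |x i| := abs_pos.mpr hxi
  have hg2 : 1 ≤ g ε₂ := by
    have h5 : |ε₂ ^ (r i) * x i| ≤ g ε₂ := by
      have := norm_le_pi_norm (fun j => ε₂ ^ (r j) * x j) i
      rwa [Real.norm_eq_abs] at this
    have h7 : (|x i|⁻¹ ^ (r i)⁻¹) ^ (r i) = |x i|⁻¹ := by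
      rw [← Real.rpow_mul (by positivity), inv_mul_cancel₀ (hr i).ne', Real.rpow_one]
    have h8 : |x i|⁻¹ ≤ ε₂ ^ (r i) := by
      rw [← h7]
      exact Real.rpow_le_rpow (Real.rpow_nonneg (by positivity) _) (le_max_right _ _) (hr i).le
    have h9 : 1 ≤ ε₂ ^ (r i) * |x i| := by
      have := mul_le_mul_of_nonneg_right h8 habs.le
      rwa [inv_mul_cancel₀ habs.ne'] at this
    calc (1:ℝ) ≤ ε₂ ^ (r i) * |x i| := h9
      _ = |ε₂ ^ (r i) * x i| := by
          rw [abs_mul, abs_of_nonneg (Real.rpow_nonneg (by linarith) _)]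
      _ ≤ g ε₂ := h5
  have hε₁₂ : ε₁ ≤ ε₂ := hε₁le1.trans hε₂ge1
  have hIVT := intermediate_value_Icc hε₁₂ hgc.continuousOn
  obtain ⟨ε, hεmem, hgε⟩ := hIVT ⟨hg1, hg2⟩
  exact ⟨ε, lt_of_lt_of_le hε₁pos hεmem.1, hgε⟩

theorem stmt_2 {n : ℕ} (r : Fin n → ℝ) (hr : ∀ i, 0 < r i) (m : ℝ) (hm : 0 < m)
    (η γ : (Fin n → ℝ) → ℝ) (hηc : Continuous η) (hγc : Continuous γ)
    (hη : RHomogeneous r m η) (hγ : RHomogeneous r m γ)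
    (hγneg : ∀ x, γ x ≤ 0)
    (himp : ∀ x : Fin n → ℝ, x ≠ 0 → γ x = 0 → η x < 0)
    (hnorm : (Fin n → ℝ) → ℝ) (hnc : Continuous hnorm)
    (hnpos : ∀ x : Fin n → ℝ, x ≠ 0 → 0 < hnorm x) (hn0 : hnorm 0 = 0)
    (hnhom : RHomogeneous r 1 hnorm) :
    ∃ lamStar : ℝ, ∃ c : ℝ, 0 < c ∧
      ∀ lam : ℝ, lamStar ≤ lam → ∀ x : Fin n → ℝ, x ≠ 0 →
        η x + lam * γ x ≤ -c * (hnorm x) ^ m := by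
  rcases Nat.eq_zero_or_pos n with hn | hn
  · subst hn
    exact ⟨0, 1, one_pos, fun lam _ x hx => absurd (Subsingleton.elim x 0) hx⟩
  haveI : Nonempty (Fin n) := ⟨⟨0, hn⟩⟩
  set K := Metric.sphere (0 : Fin n → ℝ) 1 with hKdef
  have hKx : ∀ y ∈ K, y ≠ 0 := by
    intro y hy h
    rw [hKdef, mem_sphere_zero_iff_norm, h] at hy
    simp at hy
  have hKc : IsCompact K := isCompact_sphere 0 1
  -- core lemma
  obtain ⟨lam0, hlam0, c0, hc0, hcore⟩ :=
    core_sphere η γ hηc hγc hγneg (fun x hx => himp x (hKx x hx))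
  -- upper bound of hnorm on K
  haveI : Nontrivial (Fin n → ℝ) := by
    refine ⟨fun _ => 1, 0, ?_⟩
    intro h
    have := congrFun h ⟨0, hn⟩
    norm_num at this
  have hKne : K.Nonempty := NormedSpace.sphere_nonempty.mpr zero_le_one
  obtain ⟨xb, hxb, hbmax⟩ := hKc.exists_isMaxOn hKne hnc.continuousOn
  set b := hnorm xb with hbdef
  have hb : 0 < b := hnpos xb (hKx xb hxb)
  have hbm : 0 < b ^ m := Real.rpow_pos_of_pos hb m
  refine ⟨lam0, c0 / b ^ m, by positivity, ?_⟩
  intro lam hlam x hx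
  obtain ⟨ε, hε, hεnorm⟩ := dilate_to_sphere r hr x hx
  set y : Fin n → ℝ := fun i => ε ^ (r i) * x i with hydef
  have hyK : y ∈ K := by rw [hKdef, mem_sphere_zero_iff_norm]; exact hεnorm
  have hηy : η y = ε ^ m * η x := hη ε hε x
  have hγy : γ y = ε ^ m * γ x := hγ ε hε x
  have hny : hnorm y = ε * hnorm x := by
    have := hnhom ε hε x
    rwa [Real.rpow_one] at this
  have hEm : 0 < ε ^ m := Real.rpow_pos_of_pos hε m
  have hcorey : η y + lam * γ y ≤ -c0 := hcore lam hlam y hyK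
  have hkey1 : ε ^ m * (η x + lam * γ x) ≤ -c0 := by
    rw [hηy, hγy] at hcorey; linarith [hcorey]
  have hnx : 0 < hnorm x := hnpos x hx
  have hA : 0 < (hnorm x) ^ m := Real.rpow_pos_of_pos hnx m
  have hybd : hnorm y ≤ b := hbmax hyK
  have hAE : (hnorm x) ^ m * ε ^ m ≤ b ^ m := by
    have h1 : (hnorm x * ε) ^ m ≤ b ^ m :=
      Real.rpow_le_rpow (by positivity) (by rw [mul_comm, ← hny]; exact hybd) hm.le
    rwa [Real.mul_rpow hnx.le hε.le] at h1
  have hdiv : η x + lam * γ x ≤ -c0 / ε ^ m := by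
    rw [le_div_iff₀ hEm]
    nlinarith [hkey1]
  have hfinal : -c0 / ε ^ m ≤ -(c0 / b ^ m) * (hnorm x) ^ m := by
    rw [neg_div, neg_mul, neg_le_neg_iff, div_mul_eq_mul_div, div_le_div_iff₀ hbm hEm]
    nlinarith [hAE, hc0]
  calc η x + lam * γ x ≤ -c0 / ε ^ m := hdiv
    _ ≤ -(c0 / b ^ m) * (hnorm x) ^ m := hfinal
    _ = -(c0 / b ^ m) * (hnorm x) ^ m := rfl
end

section
/- Let A₀ ∈ ℝⁿˣⁿ, B₀ ∈ ℝⁿˣ¹, R ∈ ℝ positive (scalar case m=1), and suppose Θ = Θᵀ ≻ 0 solves the Riccati equation A₀ᵀΘ + ΘA₀ − ΘB₀R⁻¹B₀ᵀΘ = −Q with Q = Q₀ + R‖G‖-scaled term, specifically Q = Q₀ + ‖R^{1/2}‖² GᵀG for some matrix G and Q₀ ≻ 0. Consider ẋ = A₀x + ΔB(t,x)p + B₀(p + h(t,x)) with feedback p = −R⁻¹B₀ᵀΘx, where ΔB(t,x) = β(t,x)B₀ with β(t,x) ≥ 0, and ‖h(t,x)‖ ≤ ‖Gx‖ for all t, x.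 Then V(x) = xᵀΘx satisfies V̇ ≤ −xᵀQ₀x ≤ −λ_min(Q₀)‖x‖² along all solutions, hence the origin is globally exponentially stable. -/
/-!
Along a trajectory `V = xᵀΘx` has derivative `2 xᵀΘẋ`. The Riccati equation turns `2 xᵀΘA₀x`
into `R⁻¹ b² - xᵀQ₀x - R g²`, where `b = B₀ᵀΘx` and `g = Gx`; the feedback `p = -R⁻¹ b`
contributes `-2 (1 + β) R⁻¹ b²`, and the disturbance term `2 b h` is absorbed by `R g² + R⁻¹ b²`
(AM-GM together with `|h| ≤ |g|`). Hence `V̇ ≤ -xᵀQ₀x ≤ -λ ‖x‖²`. As `Θ ≻ 0` gives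
`c ‖x‖² ≤ V ≤ K ‖x‖²`, this is `V̇ ≤ -(λ / K) V`, so `V`, and with it `‖x‖²`, decays
exponentially.
-/

open Matrix

namespace Matrix

variable {ι : Type*} [Fintype ι]

lemma IsSymm.dotProduct_mulVec_comm {Θ : Matrix ι ι ℝ} (hΘ : Θ.IsSymm) (a b : ι → ℝ) :
    a ⬝ᵥ Θ *ᵥ b = b ⬝ᵥ Θ *ᵥ a := by
  rw [dotProduct_mulVec, ← vecMul_transpose, hΘ.eq, dotProduct_comm]

lemma dotProduct_vecMulVec_self_mulVec (u z : ι → ℝ) :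
    z ⬝ᵥ vecMulVec u u *ᵥ z = (u ⬝ᵥ z) ^ 2 := by
  rw [vecMulVec_mulVec]
  simp [dotProduct_smul, dotProduct_comm z u, sq]

lemma IsSymm.two_mul_dotProduct_mulVec_of_riccati {A Θ Q : Matrix ι ι ℝ} {B G : ι → ℝ} {R : ℝ}
    (hΘ : Θ.IsSymm)
    (hRic : Aᵀ * Θ + Θ * A - R⁻¹ • vecMulVec (Θ *ᵥ B) (Θ *ᵥ B) = -(Q + R • vecMulVec G G))
    (z : ι → ℝ) :
    2 * (z ⬝ᵥ Θ *ᵥ (A *ᵥ z)) = R⁻¹ * (B ⬝ᵥ Θ *ᵥ z) ^ 2 - z ⬝ᵥ Q *ᵥ z - R * (G ⬝ᵥ z) ^ 2 := by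
  have hAtΘ : z ⬝ᵥ (Aᵀ * Θ) *ᵥ z = z ⬝ᵥ Θ *ᵥ (A *ᵥ z) := by
    rw [← mulVec_mulVec, dotProduct_mulVec, vecMul_transpose, hΘ.dotProduct_mulVec_comm]
  have hΘA : z ⬝ᵥ (Θ * A) *ᵥ z = z ⬝ᵥ Θ *ᵥ (A *ᵥ z) := by rw [← mulVec_mulVec]
  have hΘB : Θ *ᵥ B ⬝ᵥ z = B ⬝ᵥ Θ *ᵥ z := by
    rw [dotProduct_comm, hΘ.dotProduct_mulVec_comm]
  have h := congrArg (fun M ↦ z ⬝ᵥ M *ᵥ z) hRic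
  simp only [sub_mulVec, add_mulVec, neg_mulVec, smul_mulVec, dotProduct_sub, dotProduct_add,
    dotProduct_neg, dotProduct_smul, smul_eq_mul, dotProduct_vecMulVec_self_mulVec, hAtΘ, hΘA,
    hΘB] at h
  linarith

section Order

open scoped MatrixOrder

lemma dotProduct_mulVec_le_of_le {A B : Matrix ι ι ℝ} (h : A ≤ B) (z : ι → ℝ) :
    z ⬝ᵥ A *ᵥ z ≤ z ⬝ᵥ B *ᵥ z := by
  have := (Matrix.le_iff.mp h).dotProduct_mulVec_nonneg z
  rw [star_trivial, sub_mulVec, dotProduct_sub] at this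
  linarith

variable [DecidableEq ι]

lemma dotProduct_algebraMap_mulVec (c : ℝ) (z : ι → ℝ) :
    z ⬝ᵥ algebraMap ℝ (Matrix ι ι ℝ) c *ᵥ z = c * ∑ i, z i ^ 2 := by
  rw [Algebra.algebraMap_eq_smul_one, smul_mulVec, one_mulVec, dotProduct_smul, smul_eq_mul]
  simp only [dotProduct, sq]

lemma PosDef.exists_pos_mul_sum_sq_le {Θ : Matrix ι ι ℝ} (hΘ : Θ.PosDef) :
    ∃ c > 0, ∀ z : ι → ℝ, c * ∑ i, z i ^ 2 ≤ z ⬝ᵥ Θ *ᵥ z := by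
  suffices ∃ c > 0, algebraMap ℝ (Matrix ι ι ℝ) c ≤ Θ by
    obtain ⟨c, hc, hcΘ⟩ := this
    exact ⟨c, hc, fun z ↦ dotProduct_algebraMap_mulVec c z ▸ dotProduct_mulVec_le_of_le hcΘ z⟩
  cases subsingleton_or_nontrivial (Matrix ι ι ℝ)
  · exact ⟨1, one_pos, (Subsingleton.elim _ Θ).le⟩
  rw [CFC.exists_pos_algebraMap_le_iff hΘ.isHermitian,
    hΘ.isHermitian.spectrum_real_eq_range_eigenvalues]
  rintro _ ⟨i, rfl⟩
  exact hΘ.eigenvalues_pos i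

lemma PosSemidef.exists_pos_le_mul_sum_sq {Θ : Matrix ι ι ℝ} (hΘ : Θ.PosSemidef) :
    ∃ C > 0, ∀ z : ι → ℝ, z ⬝ᵥ Θ *ᵥ z ≤ C * ∑ i, z i ^ 2 := by
  suffices Θ ≤ algebraMap ℝ (Matrix ι ι ℝ) (Θ.trace + 1) from
    ⟨Θ.trace + 1, by linarith [hΘ.trace_nonneg],
      fun z ↦ dotProduct_algebraMap_mulVec _ z ▸ dotProduct_mulVec_le_of_le this z⟩
  refine le_algebraMap_of_spectrum_le (ha := hΘ.isHermitian) ?_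
  rw [hΘ.isHermitian.spectrum_real_eq_range_eigenvalues]
  rintro _ ⟨i, rfl⟩
  rw [hΘ.isHermitian.trace_eq_sum_eigenvalues, RCLike.ofReal_real_eq_id, Function.id_def]
  linarith [Finset.single_le_sum (fun j _ ↦ hΘ.eigenvalues_nonneg j) (Finset.mem_univ i)]

end Order

end Matrix

section Calculus

variable {ι : Type*} [Fintype ι]

lemma HasDerivAt.dotProduct {u v : ℝ → ι → ℝ} {u' v' : ι → ℝ} {t : ℝ}
    (hu : HasDerivAt u u' t) (hv : HasDerivAt v v' t) :
    HasDerivAt (fun s ↦ u s ⬝ᵥ v s) (u' ⬝ᵥ v t + u t ⬝ᵥ v') t := by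
  have hu' := hasDerivAt_pi.mp hu
  have hv' := hasDerivAt_pi.mp hv
  have := HasDerivAt.fun_sum (u := Finset.univ) fun i _ ↦ (hu' i).fun_mul (hv' i)
  rw [Finset.sum_add_distrib] at this
  exact this

lemma HasDerivAt.mulVec (M : Matrix ι ι ℝ) {u : ℝ → ι → ℝ} {u' : ι → ℝ} {t : ℝ}
    (hu : HasDerivAt u u' t) : HasDerivAt (fun s ↦ M *ᵥ u s) (M *ᵥ u') t :=
  (Matrix.mulVecLin M).toContinuousLinearMap.hasFDerivAt.comp_hasDerivAt t hu

lemma HasDerivAt.dotProduct_mulVec_self {Θ : Matrix ι ι ℝ} (hΘ : Θ.IsSymm) {x : ℝ → ι → ℝ}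
    {v : ι → ℝ} {t : ℝ} (hx : HasDerivAt x v t) :
    HasDerivAt (fun s ↦ x s ⬝ᵥ Θ *ᵥ x s) (2 * (x t ⬝ᵥ Θ *ᵥ v)) t := by
  convert hx.dotProduct (hx.mulVec Θ) using 1
  rw [hΘ.dotProduct_mulVec_comm v]
  ring

end Calculus

lemma two_mul_le_mul_sq_add_inv_mul_sq {R b g η : ℝ} (hR : 0 < R) (hη : |η| ≤ |g|) :
    2 * (b * η) ≤ R * g ^ 2 + R⁻¹ * b ^ 2 := by
  have hbη : b * η ≤ |b| * |g| :=
    (le_abs_self _).trans ((abs_mul b η).trans_le (mul_le_mul_of_nonneg_left hη (abs_nonneg b)))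
  have hsq : 0 ≤ R⁻¹ * (R * |g| - |b|) ^ 2 := by positivity
  have hexp : R⁻¹ * (R * |g| - |b|) ^ 2 = R * |g| ^ 2 + R⁻¹ * |b| ^ 2 - 2 * (|b| * |g|) := by
    field_simp
    ring
  rw [sq_abs, sq_abs] at hexp
  linarith

lemma riccati_feedback_dissipation {ι : Type*} [Fintype ι] {A Θ Q : Matrix ι ι ℝ}
    {B G : ι → ℝ} {R : ℝ} (hR : 0 < R) (hΘ : Θ.IsSymm)
    (hRic : Aᵀ * Θ + Θ * A - R⁻¹ • vecMulVec (Θ *ᵥ B) (Θ *ᵥ B) = -(Q + R • vecMulVec G G))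
    {β η p : ℝ} (hβ : 0 ≤ β) (z : ι → ℝ) (hη : |η| ≤ |G ⬝ᵥ z|)
    (hp : p = -R⁻¹ * (B ⬝ᵥ Θ *ᵥ z)) :
    2 * (z ⬝ᵥ Θ *ᵥ (A *ᵥ z + (β * p) • B + (p + η) • B)) ≤ -(z ⬝ᵥ Q *ᵥ z) := by
  have hRic_z := hΘ.two_mul_dotProduct_mulVec_of_riccati hRic z
  have hamgm := two_mul_le_mul_sq_add_inv_mul_sq (b := B ⬝ᵥ Θ *ᵥ z) hR hη
  rw [mulVec_add, mulVec_add, mulVec_smul, mulVec_smul, dotProduct_add, dotProduct_add,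
    dotProduct_smul, dotProduct_smul, smul_eq_mul, smul_eq_mul, hΘ.dotProduct_mulVec_comm z B]
  have hβterm : 0 ≤ β * R⁻¹ * (B ⬝ᵥ Θ *ᵥ z) ^ 2 := by positivity
  subst hp
  linarith

lemma le_exp_mul_of_hasDerivAt_le_neg_mul {V V' : ℝ → ℝ} {a : ℝ}
    (hV : ∀ t, HasDerivAt V (V' t) t) (hV' : ∀ t, V' t ≤ -a * V t) {t : ℝ} (ht : 0 ≤ t) :
    V t ≤ Real.exp (-a * t) * V 0 := by
  have hW : ∀ s, HasDerivAt (fun s ↦ Real.exp (a * s) * V s)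
      (Real.exp (a * s) * (a * V s + V' s)) s := fun s ↦
    (((hasDerivAt_id s).const_mul a).exp.fun_mul (hV s)).congr_deriv
      (by simp only [id, mul_one]; ring)
  have hanti := antitone_of_hasDerivAt_nonpos hW fun s ↦
    mul_nonpos_of_nonneg_of_nonpos (Real.exp_pos _).le (by linarith [hV' s])
  have := hanti ht
  simp only [mul_zero, Real.exp_zero, one_mul] at this
  calc V t = Real.exp (-a * t) * (Real.exp (a * t) * V t) := by
        rw [← mul_assoc, ← Real.exp_add]; simp
    _ ≤ Real.exp (-a * t) * V 0 := by gcongr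

lemma Real.sqrt_le_sqrt_mul_exp_mul_sqrt {S S₀ K a t : ℝ} (hK : 0 ≤ K)
    (h : S ≤ K * Real.exp (-a * t) * S₀) :
    √S ≤ √K * Real.exp (-(a / 2) * t) * √S₀ := by
  calc √S ≤ √(K * Real.exp (-a * t) * S₀) := Real.sqrt_le_sqrt h
    _ = √K * √(Real.exp (-a * t)) * √S₀ := by
      rw [Real.sqrt_mul (by positivity), Real.sqrt_mul hK]
    _ = √K * Real.exp (-(a / 2) * t) * √S₀ := by
      rw [← Real.exp_half]; ring_nf

theorem stmt_7_general {n : ℕ} (A0 : Matrix (Fin n) (Fin n) ℝ) (B0 G : Fin n → ℝ)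
    (R : ℝ) (hR : 0 < R)
    (Θ Q0 : Matrix (Fin n) (Fin n) ℝ) (hΘ : Θ.PosDef) (hΘs : Θ.IsSymm)
    -- Riccati equation A₀ᵀΘ + ΘA₀ − ΘB₀R⁻¹B₀ᵀΘ = −Q with Q = Q₀ + ‖R^{1/2}‖²GᵀG
    (hRic : A0ᵀ * Θ + Θ * A0 - R⁻¹ • vecMulVec (Θ.mulVec B0) (Θ.mulVec B0)
      = -(Q0 + R • vecMulVec G G))
    (lam0 : ℝ) (hlam0 : 0 < lam0)
    (hlam0min : ∀ z : Fin n → ℝ, lam0 * (∑ i, (z i) ^ 2) ≤ z ⬝ᵥ Q0.mulVec z)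
    (β : ℝ → (Fin n → ℝ) → ℝ) (hβ : ∀ t z, 0 ≤ β t z)
    (h : ℝ → (Fin n → ℝ) → ℝ) (hh : ∀ t z, |h t z| ≤ |G ⬝ᵥ z|)
    (x : ℝ → (Fin n → ℝ)) (p : ℝ → ℝ)
    (hp : ∀ t, p t = -R⁻¹ * (B0 ⬝ᵥ Θ.mulVec (x t)))
    (hx : ∀ t, HasDerivAt x
      (A0.mulVec (x t) + (β t (x t) * p t) • B0 + (p t + h t (x t)) • B0) t) :
    (∀ t, deriv (fun s => x s ⬝ᵥ Θ.mulVec (x s)) t ≤ -(x t ⬝ᵥ Q0.mulVec (x t)) ∧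
        -(x t ⬝ᵥ Q0.mulVec (x t)) ≤ -lam0 * ∑ i, (x t i) ^ 2) ∧
    (∃ C : ℝ, 0 < C ∧ ∃ α : ℝ, 0 < α ∧ ∀ t : ℝ, 0 ≤ t →
      Real.sqrt (∑ i, (x t i) ^ 2) ≤ C * Real.exp (-α * t) * Real.sqrt (∑ i, (x 0 i) ^ 2)) := by
  have hV t := (hx t).dotProduct_mulVec_self hΘs
  have hdiss t := riccati_feedback_dissipation hR hΘs hRic (hβ t (x t)) (x t) (hh t (x t)) (hp t)
  refine ⟨fun t ↦ ⟨(hV t).deriv ▸ hdiss t, by linarith [hlam0min (x t)]⟩, ?_⟩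
  obtain ⟨c, hc, hlow⟩ := hΘ.exists_pos_mul_sum_sq_le
  obtain ⟨K, hK, hup⟩ := hΘ.posSemidef.exists_pos_le_mul_sum_sq
  have hQ0Θ s : -(x s ⬝ᵥ Q0 *ᵥ x s) ≤ -(lam0 / K) * (x s ⬝ᵥ Θ *ᵥ x s) := by
    rw [neg_mul, neg_le_neg_iff, div_mul_eq_mul_div, div_le_iff₀ hK]
    nlinarith [hup (x s), hlam0min (x s)]
  have hdecay t (ht : 0 ≤ t) :=
    le_exp_mul_of_hasDerivAt_le_neg_mul hV (fun s ↦ (hdiss s).trans (hQ0Θ s)) ht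
  refine ⟨√(K / c), by positivity, lam0 / K / 2, by positivity, fun t ht ↦
    Real.sqrt_le_sqrt_mul_exp_mul_sqrt (by positivity) (le_of_mul_le_mul_left ?_ hc)⟩
  calc c * ∑ i, x t i ^ 2 ≤ x t ⬝ᵥ Θ *ᵥ x t := hlow (x t)
    _ ≤ Real.exp (-(lam0 / K) * t) * (x 0 ⬝ᵥ Θ *ᵥ x 0) := hdecay t ht
    _ ≤ Real.exp (-(lam0 / K) * t) * (K * ∑ i, x 0 i ^ 2) := by gcongr; exact hup (x 0)
    _ = c * (K / c * Real.exp (-(lam0 / K) * t) * ∑ i, x 0 i ^ 2) := by field_simp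

theorem stmt_7 {n : ℕ} (A0 : Matrix (Fin n) (Fin n) ℝ) (B0 G : Fin n → ℝ)
    (R : ℝ) (hR : 0 < R)
    (Θ Q0 : Matrix (Fin n) (Fin n) ℝ) (hΘ : Θ.PosDef) (hΘs : Θ.IsSymm) (hQ0 : Q0.PosDef)
    -- Riccati equation A₀ᵀΘ + ΘA₀ − ΘB₀R⁻¹B₀ᵀΘ = −Q with Q = Q₀ + ‖R^{1/2}‖²GᵀG
    (hRic : A0ᵀ * Θ + Θ * A0 - R⁻¹ • vecMulVec (Θ.mulVec B0) (Θ.mulVec B0)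
      = -(Q0 + R • vecMulVec G G))
    (lam0 : ℝ) (hlam0 : 0 < lam0)
    (hlam0min : ∀ z : Fin n → ℝ, lam0 * (∑ i, (z i) ^ 2) ≤ z ⬝ᵥ Q0.mulVec z)
    (β : ℝ → (Fin n → ℝ) → ℝ) (hβ : ∀ t z, 0 ≤ β t z)
    (h : ℝ → (Fin n → ℝ) → ℝ) (hh : ∀ t z, |h t z| ≤ |G ⬝ᵥ z|)
    (x : ℝ → (Fin n → ℝ)) (p : ℝ → ℝ)
    (hp : ∀ t, p t = -R⁻¹ * (B0 ⬝ᵥ Θ.mulVec (x t)))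
    (hx : ∀ t, HasDerivAt x
      (A0.mulVec (x t) + (β t (x t) * p t) • B0 + (p t + h t (x t)) • B0) t) :
    (∀ t, deriv (fun s => x s ⬝ᵥ Θ.mulVec (x s)) t ≤ -(x t ⬝ᵥ Q0.mulVec (x t)) ∧
        -(x t ⬝ᵥ Q0.mulVec (x t)) ≤ -lam0 * ∑ i, (x t i) ^ 2) ∧
    (∃ C : ℝ, 0 < C ∧ ∃ α : ℝ, 0 < α ∧ ∀ t : ℝ, 0 ≤ t →
      Real.sqrt (∑ i, (x t i) ^ 2) ≤ C * Real.exp (-α * t) * Real.sqrt (∑ i, (x 0 i) ^ 2)) :=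
  stmt_7_general A0 B0 G R hR Θ Q0 hΘ hΘs hRic lam0 hlam0 hlam0min β hβ h hh x p hp hx
end
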